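/- arXiv:1308.2664 — 5 statements merged into one kernel-verified Lean document; each statement's English description precedes it below -/
import Mathlib

section
/- Let g : ℝ → ℝ be a nonnegative continuously differentiable function with g and g' square-integrable, and suppose ∫_{-∞}^{∞} g(v)² dv = N. Then for every u ∈ ℝ, g(u)⁴ ≤ 4 N ∫_{-∞}^{∞} (g'(v))² dv. -/
/-!
Since `g` and `g'` are in `L²`, the product `g g'` is integrable, so `g²` has integrable
derivative `2 g g'` and tends to `0` at `-∞`. Hence `g(u)² = 2 ∫_{-∞}^u g g' ≤ 2 ∫ |g g'|`, and
squaring and applying Cauchy–Schwarz gives `g(u)⁴ ≤ 4 (∫ g²) (∫ g'²)`.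
-/

open MeasureTheory Real Filter Set Topology

theorem integral_abs_mul_sq_le {α : Type*} [MeasurableSpace α] {μ : Measure α} {f h : α → ℝ}
    (hf : MemLp f 2 μ) (hh : MemLp h 2 μ) :
    (∫ a, |f a * h a| ∂μ) ^ 2 ≤ (∫ a, f a ^ 2 ∂μ) * ∫ a, h a ^ 2 ∂μ := by
  have hf2 : 0 ≤ ∫ a, f a ^ 2 ∂μ := integral_nonneg fun a => sq_nonneg _
  have hh2 : 0 ≤ ∫ a, h a ^ 2 ∂μ := integral_nonneg fun a => sq_nonneg _
  have holder := integral_mul_norm_le_Lp_mul_Lq (μ := μ) Real.HolderConjugate.two_two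
    (by simpa using hf) (by simpa using hh)
  simp only [Real.norm_eq_abs, ← abs_mul, Real.rpow_two, sq_abs] at holder
  rw [← Real.mul_rpow hf2 hh2, ← Real.sqrt_eq_rpow] at holder
  exact (Real.le_sqrt (integral_nonneg fun a => abs_nonneg _) (mul_nonneg hf2 hh2)).1 holder

theorem sq_le_two_mul_integral_abs_mul_deriv {f f' : ℝ → ℝ}
    (hderiv : ∀ x, HasDerivAt f (f' x) x) (hf : MemLp f 2) (hf' : MemLp f' 2) (u : ℝ) :
    f u ^ 2 ≤ 2 * ∫ x, |f x * f' x| := by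
  have hderiv_sq : ∀ x, HasDerivAt (fun x => f x ^ 2) (2 * (f x * f' x)) x := fun x => by
    simpa [mul_assoc] using (hderiv x).fun_pow 2
  have hint : Integrable fun x => f x * f' x := hf.integrable_mul hf'
  have hlim : Tendsto (fun x => f x ^ 2) atBot (𝓝 0) :=
    tendsto_zero_of_hasDerivAt_of_integrableOn_Iic (a := 0) (fun x _ => hderiv_sq x)
      (hint.const_mul 2).integrableOn hf.integrable_sq.integrableOn
  have hftc : ∫ x in Iic u, 2 * (f x * f' x) = f u ^ 2 := by
    simpa using integral_Iic_of_hasDerivAt_of_tendsto' (fun x _ => hderiv_sq x)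
      (hint.const_mul 2).integrableOn hlim
  calc f u ^ 2 = 2 * ∫ x in Iic u, f x * f' x := by rw [← hftc, integral_const_mul]
    _ ≤ 2 * ∫ x in Iic u, |f x * f' x| :=
        mul_le_mul_of_nonneg_left (integral_mono hint.integrableOn hint.abs.integrableOn
          fun x => le_abs_self _) zero_le_two
    _ ≤ 2 * ∫ x, |f x * f' x| :=
        mul_le_mul_of_nonneg_left (setIntegral_le_integral hint.abs
          (.of_forall fun x => abs_nonneg _)) zero_le_two

theorem pow_four_le_four_mul_integral_sq_mul_integral_deriv_sq {f f' : ℝ → ℝ}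
    (hderiv : ∀ x, HasDerivAt f (f' x) x) (hf : MemLp f 2) (hf' : MemLp f' 2) (u : ℝ) :
    f u ^ 4 ≤ 4 * (∫ x, f x ^ 2) * ∫ x, f' x ^ 2 :=
  calc f u ^ 4 = (f u ^ 2) ^ 2 := by ring
    _ ≤ (2 * ∫ x, |f x * f' x|) ^ 2 :=
        pow_le_pow_left₀ (sq_nonneg _) (sq_le_two_mul_integral_abs_mul_deriv hderiv hf hf' u) 2
    _ = 4 * (∫ x, |f x * f' x|) ^ 2 := by ring
    _ ≤ 4 * ((∫ x, f x ^ 2) * ∫ x, f' x ^ 2) := by gcongr; exact integral_abs_mul_sq_le hf hf'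
    _ = 4 * (∫ x, f x ^ 2) * ∫ x, f' x ^ 2 := by ring

theorem stmt0_general (g : ℝ → ℝ) (N : ℝ)
    (hg : ContDiff ℝ 1 g)
    (hgL2 : MemLp g 2 (volume : Measure ℝ))
    (hg'L2 : MemLp (deriv g) 2 (volume : Measure ℝ))
    (hN : ∫ v, (g v) ^ 2 = N) :
    ∀ u : ℝ, (g u) ^ 4 ≤ 4 * N * ∫ v, (deriv g v) ^ 2 := by
  intro u
  rw [← hN]
  exact pow_four_le_four_mul_integral_sq_mul_integral_deriv_sq
    (fun x => (hg.differentiable one_ne_zero x).hasDerivAt) hgL2 hg'L2 u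

theorem stmt0 (g : ℝ → ℝ) (N : ℝ)
    (hg : ContDiff ℝ 1 g) (hpos : ∀ v, 0 ≤ g v)
    (hgL2 : MemLp g 2 (volume : Measure ℝ))
    (hg'L2 : MemLp (deriv g) 2 (volume : Measure ℝ))
    (hN : ∫ v, (g v) ^ 2 = N) :
    ∀ u : ℝ, (g u) ^ 4 ≤ 4 * N * ∫ v, (deriv g v) ^ 2 :=
  stmt0_general g N hg hgL2 hg'L2 hN
end

section
/- Let ρ : ℝ³ → ℝ be a nonnegative smooth integrable function with √ρ having square-integrable gradient, and define g(u)² = ∫∫ ρ(s,t,u) ds dt. Then ∫_{-∞}^{∞} (g'(v))² dv ≤ ∫_{ℝ³} |∇√ρ(x)|² dx. -/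
open MeasureTheory Real


-- aux 1: a.e. equality from interval integral equality
lemma ae_eq_of_intervalIntegral_eq {f₁ f₂ : ℝ → ℝ}
    (h₁ : LocallyIntegrable f₁ (volume : Measure ℝ))
    (h₂ : LocallyIntegrable f₂ (volume : Measure ℝ))
    (h : ∀ a b : ℝ, ∫ x in a..b, f₁ x = ∫ x in a..b, f₂ x) :
    f₁ =ᵐ[(volume : Measure ℝ)] f₂ := by
  set v := Besicovitch.vitaliFamily (volume : Measure ℝ) with hv
  filter_upwards [v.ae_tendsto_average h₁, v.ae_tendsto_average h₂] with x hx1 hx2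
  have heq : ∀ᶠ a in v.filterAt x, (⨍ y in a, f₁ y) = ⨍ y in a, f₂ y := by
    filter_upwards [v.eventually_filterAt_mem_setsAt x] with a ha
    obtain ⟨r, hr, rfl⟩ := ha
    have : ∫ y in Metric.closedBall x r, f₁ y = ∫ y in Metric.closedBall x r, f₂ y := by
      rw [Real.closedBall_eq_Icc, MeasureTheory.integral_Icc_eq_integral_Ioc,
        MeasureTheory.integral_Icc_eq_integral_Ioc,
        ← intervalIntegral.integral_of_le (by have := Set.mem_Ioi.mp hr; linarith : x - r ≤ x + r),
        ← intervalIntegral.integral_of_le (by have := Set.mem_Ioi.mp hr; linarith : x - r ≤ x + r)]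
      exact h _ _
    simp only [setAverage_eq, this]
  exact tendsto_nhds_unique (Filter.Tendsto.congr' heq hx1) hx2

lemma abs_integral_mul_le_sqrt {α : Type*} [MeasurableSpace α] {μ : Measure α} {f h : α → ℝ}
    (hf : MemLp f 2 μ) (hh : MemLp h 2 μ) :
    |∫ x, f x * h x ∂μ| ≤ Real.sqrt (∫ x, f x ^ 2 ∂μ) * Real.sqrt (∫ x, h x ^ 2 ∂μ) := by
  have hpq : Real.HolderConjugate 2 2 := Real.HolderConjugate.two_two
  have h2 : (ENNReal.ofReal (2:ℝ)) = 2 := by norm_num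
  calc |∫ x, f x * h x ∂μ| ≤ ∫ x, |f x| * |h x| ∂μ := by
        simpa [Real.norm_eq_abs] using
          norm_integral_le_integral_norm (μ := μ) (fun x => f x * h x)
    _ ≤ (∫ x, |f x| ^ (2:ℝ) ∂μ) ^ ((1:ℝ)/2) * (∫ x, |h x| ^ (2:ℝ) ∂μ) ^ ((1:ℝ)/2) := by
        refine MeasureTheory.integral_mul_le_Lp_mul_Lq_of_nonneg hpq
          (Filter.Eventually.of_forall fun x => abs_nonneg _)
          (Filter.Eventually.of_forall fun x => abs_nonneg _) ?_ ?_
        · rw [h2]; exact hf.abs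
        · rw [h2]; exact hh.abs
    _ = Real.sqrt (∫ x, f x ^ 2 ∂μ) * Real.sqrt (∫ x, h x ^ 2 ∂μ) := by
        rw [Real.sqrt_eq_rpow, Real.sqrt_eq_rpow]
        congr 2 <;> [skip; skip] <;>
        · apply integral_congr_ae; filter_upwards with x
          rw [show ((2:ℝ)) = ((2:ℕ):ℝ) by norm_num, Real.rpow_natCast, sq_abs]

lemma fderiv_sqrt_identity (ρ : ℝ × ℝ × ℝ → ℝ) (hρ : ContDiff ℝ (⊤ : ℕ∞) ρ) (hρpos : ∀ x, 0 ≤ ρ x)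
    (x v : ℝ × ℝ × ℝ) :
    fderiv ℝ ρ x v = 2 * Real.sqrt (ρ x) * fderiv ℝ (fun y => Real.sqrt (ρ y)) x v := by
  rcases eq_or_lt_of_le (hρpos x) with hx | hx
  · -- ρ x = 0 : x is a local min of ρ
    have hmin : IsLocalMin ρ x := by
      apply Filter.Eventually.of_forall
      intro y; rw [← hx]; exact hρpos y
    rw [hmin.fderiv_eq_zero, ← hx]
    simp
  · -- ρ x > 0
    have hd : HasFDerivAt ρ (fderiv ℝ ρ x) x :=
      (hρ.differentiable (by simp) x).hasFDerivAt
    have hsq : HasDerivAt Real.sqrt (1 / (2 * Real.sqrt (ρ x))) (ρ x) :=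
      Real.hasDerivAt_sqrt (ne_of_gt hx)
    have hcomp : HasFDerivAt (fun y => Real.sqrt (ρ y))
        ((1 / (2 * Real.sqrt (ρ x))) • fderiv ℝ ρ x) x := by
      simpa [Function.comp_def] using hsq.comp_hasFDerivAt x hd
    rw [hcomp.fderiv]
    have hs : Real.sqrt (ρ x) ≠ 0 := ne_of_gt (Real.sqrt_pos.mpr hx)
    simp only [ContinuousLinearMap.coe_smul', Pi.smul_apply, smul_eq_mul]
    field_simp

lemma integrable_assoc {φ : ℝ × ℝ × ℝ → ℝ} (hφ : Integrable φ (volume : Measure (ℝ × ℝ × ℝ))) :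
    Integrable (fun p : (ℝ × ℝ) × ℝ => φ (p.1.1, p.1.2, p.2))
      ((volume : Measure (ℝ × ℝ)).prod (volume : Measure ℝ)) := by
  have h := (MeasureTheory.volume_preserving_prodAssoc (α₁ := ℝ) (β₁ := ℝ) (γ₁ := ℝ)).integrable_comp
    hφ.aestronglyMeasurable
  have h2 : Integrable (φ ∘ (MeasurableEquiv.prodAssoc : (ℝ × ℝ) × ℝ ≃ᵐ ℝ × ℝ × ℝ))
      (volume : Measure ((ℝ × ℝ) × ℝ)) := h.mpr hφ
  rw [MeasureTheory.Measure.volume_eq_prod] at h2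
  exact h2

lemma integral_assoc (φ : ℝ × ℝ × ℝ → ℝ) :
    ∫ x : ℝ × ℝ × ℝ, φ x =
      ∫ p : (ℝ × ℝ) × ℝ, φ (p.1.1, p.1.2, p.2)
        ∂((volume : Measure (ℝ × ℝ)).prod (volume : Measure ℝ)) := by
  rw [← MeasureTheory.Measure.volume_eq_prod]
  exact ((MeasureTheory.volume_preserving_prodAssoc (α₁ := ℝ) (β₁ := ℝ) (γ₁ := ℝ)).integral_comp
    (MeasurableEquiv.prodAssoc : (ℝ × ℝ) × ℝ ≃ᵐ ℝ × ℝ × ℝ).measurableEmbedding φ).symm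


/-- Partial derivative of a function on ℝ³ = ℝ×ℝ×ℝ in the direction `e`. -/
noncomputable def pderiv3 (f : ℝ × ℝ × ℝ → ℝ) (e : ℝ × ℝ × ℝ) (x : ℝ × ℝ × ℝ) : ℝ :=
  fderiv ℝ f x e

theorem stmt2 (ρ : ℝ × ℝ × ℝ → ℝ) (g : ℝ → ℝ)
    (hρ : ContDiff ℝ (⊤ : ℕ∞) ρ) (hρpos : ∀ x, 0 ≤ ρ x) (hρint : Integrable ρ)
    (hgrad : MemLp (fun x => Real.sqrt (pderiv3 (fun y => Real.sqrt (ρ y)) (1,0,0) x ^ 2 +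
        pderiv3 (fun y => Real.sqrt (ρ y)) (0,1,0) x ^ 2 +
        pderiv3 (fun y => Real.sqrt (ρ y)) (0,0,1) x ^ 2)) 2 (volume : Measure (ℝ × ℝ × ℝ)))
    (hg : ContDiff ℝ 1 g) (hgpos : ∀ u, 0 ≤ g u)
    (hgdef : ∀ u, (g u) ^ 2 = ∫ st : ℝ × ℝ, ρ (st.1, st.2, u)) :
    (∫ v, (deriv g v) ^ 2) ≤
      ∫ x : ℝ × ℝ × ℝ, (pderiv3 (fun y => Real.sqrt (ρ y)) (1,0,0) x ^ 2 +
        pderiv3 (fun y => Real.sqrt (ρ y)) (0,1,0) x ^ 2 +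
        pderiv3 (fun y => Real.sqrt (ρ y)) (0,0,1) x ^ 2) := by
  set q : ℝ × ℝ × ℝ → ℝ := fun y => Real.sqrt (ρ y) with hq
  set W : ℝ × ℝ × ℝ → ℝ := fun x => pderiv3 q (1,0,0) x ^ 2 +
      pderiv3 q (0,1,0) x ^ 2 + pderiv3 q (0,0,1) x ^ 2 with hW
  set D : ℝ × ℝ × ℝ → ℝ := fun x => fderiv ℝ q x (0,0,1) with hD
  set P : ℝ × ℝ × ℝ → ℝ := fun x => fderiv ℝ ρ x (0,0,1) with hP
  have hDW : ∀ x, D x = pderiv3 q (0,0,1) x := fun x => rfl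
  have hWnonneg : ∀ x, 0 ≤ W x := by
    intro x; simp only [hW]; positivity
  -- integrability of W
  have hW_int : Integrable W := by
    have h1 := hgrad.integrable_sq
    have : (fun x => Real.sqrt (W x) ^ 2) = W := by
      funext x; exact Real.sq_sqrt (hWnonneg x)
    rwa [← this]
  -- measurability of D
  have hD_meas : Measurable D := measurable_fderiv_apply_const ℝ q (0,0,1)
  have hD2_int : Integrable (fun x => D x ^ 2) := by
    refine hW_int.mono' ((hD_meas.pow_const 2).aestronglyMeasurable) ?_
    filter_upwards with x
    rw [Real.norm_eq_abs, abs_of_nonneg (sq_nonneg _), hDW x]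
    have h1 := sq_nonneg (pderiv3 q (1,0,0) x)
    have h2 := sq_nonneg (pderiv3 q (0,1,0) x)
    show _ ≤ W x
    rw [hW]; dsimp only; linarith
  -- identity P = 2 q D
  have hPid : ∀ x, P x = 2 * q x * D x := fun x =>
    fderiv_sqrt_identity ρ hρ hρpos x (0,0,1)
  -- continuity and integrability of P
  have hP_cont : Continuous P :=
    (hρ.continuous_fderiv (by simp)).clm_apply continuous_const
  have hq_sq : ∀ x, q x ^ 2 = ρ x := fun x => Real.sq_sqrt (hρpos x)
  have hP_int : Integrable P := by
    refine (hρint.add hD2_int).mono' hP_cont.aestronglyMeasurable ?_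
    filter_upwards with x
    rw [Real.norm_eq_abs, hPid x, Pi.add_apply]
    have h1 : |2 * q x * D x| = 2 * q x * |D x| := by
      rw [abs_mul, abs_of_nonneg (by positivity : (0:ℝ) ≤ 2 * q x)]
    rw [h1, ← hq_sq x, ← sq_abs (D x)]
    nlinarith [sq_nonneg (q x - |D x|), abs_nonneg (D x), Real.sqrt_nonneg (ρ x)]
  -- transported integrable functions
  have hρassoc := integrable_assoc hρint
  have hPassoc := integrable_assoc hP_int
  have hD2assoc := integrable_assoc hD2_int
  -- the functions H and G
  set H : ℝ → ℝ := fun u => ∫ st : ℝ × ℝ, D (st.1, st.2, u) ^ 2 with hH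
  set G : ℝ → ℝ := fun u => ∫ st : ℝ × ℝ, P (st.1, st.2, u) with hG
  have hH_int : Integrable H := hD2assoc.integral_prod_right
  have hG_int : Integrable G := hPassoc.integral_prod_right
  have hHnonneg : ∀ u, 0 ≤ H u := fun u => integral_nonneg (fun st => sq_nonneg _)
  -- ∫ H = ∫ D²
  have hintH : ∫ u, H u = ∫ x : ℝ × ℝ × ℝ, D x ^ 2 := by
    rw [integral_assoc (fun x => D x ^ 2),
      MeasureTheory.integral_prod_symm _ hD2assoc]
  -- a.e. slice integrability
  have hρslice : ∀ᵐ u : ℝ, Integrable (fun st : ℝ × ℝ => ρ (st.1, st.2, u)) :=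
    hρassoc.prod_left_ae
  have hD2slice : ∀ᵐ u : ℝ, Integrable (fun st : ℝ × ℝ => D (st.1, st.2, u) ^ 2) :=
    hD2assoc.prod_left_ae
  -- derivative facts for g
  have hgderiv : ∀ u, HasDerivAt g (deriv g u) u := fun u =>
    ((hg.differentiable one_ne_zero) u).hasDerivAt
  have hsqg : ∀ u, HasDerivAt (fun v => g v ^ 2) (2 * g u * deriv g u) u := by
    intro u
    have := (hgderiv u).pow 2
    simpa [Pi.pow_def, mul_comm, mul_assoc, mul_left_comm] using this
  have hcont2gg' : Continuous (fun u => 2 * g u * deriv g u) :=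
    (continuous_const.mul hg.continuous).mul (hg.continuous_deriv le_rfl)
  -- FTC for g²
  have hLHS : ∀ a b : ℝ, ∫ u in a..b, (2 * g u * deriv g u) = g b ^ 2 - g a ^ 2 := by
    intro a b
    exact intervalIntegral.integral_eq_sub_of_hasDerivAt (fun u _ => hsqg u)
      (hcont2gg'.intervalIntegrable a b)
  -- FTC + Fubini for G, for endpoints in the good set S
  set S : Set ℝ := {u | Integrable (fun st : ℝ × ℝ => ρ (st.1, st.2, u))} with hSdef
  have hS : ∀ᵐ u : ℝ, u ∈ S := hρslice
  have hP_line_deriv : ∀ (st : ℝ × ℝ) (u : ℝ),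
      HasDerivAt (fun w => ρ (st.1, st.2, w)) (P (st.1, st.2, u)) u := by
    intro st u
    have hline : HasDerivAt (fun w : ℝ => ((st.1 : ℝ), (st.2 : ℝ), w))
        ((0:ℝ), (0:ℝ), (1:ℝ)) u :=
      (hasDerivAt_const u st.1).prodMk ((hasDerivAt_const u st.2).prodMk (hasDerivAt_id u))
    exact (hρ.differentiable (by simp) _).hasFDerivAt.comp_hasDerivAt u hline
  have hP_line_cont : ∀ st : ℝ × ℝ, Continuous (fun w => P (st.1, st.2, w)) := by
    intro st
    exact hP_cont.comp (continuous_const.prodMk (continuous_const.prodMk continuous_id))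
  have step1 : ∀ a b : ℝ, a ≤ b → a ∈ S → b ∈ S →
      ∫ u in a..b, G u = g b ^ 2 - g a ^ 2 := by
    intro a b hab ha hb
    rw [intervalIntegral.integral_of_le hab]
    have hrestr : Integrable (fun p : (ℝ × ℝ) × ℝ => P (p.1.1, p.1.2, p.2))
        ((volume : Measure (ℝ × ℝ)).prod ((volume : Measure ℝ).restrict (Set.Ioc a b))) := by
      have : (volume : Measure (ℝ × ℝ)).prod ((volume : Measure ℝ).restrict (Set.Ioc a b)) =
          ((volume : Measure (ℝ × ℝ)).prod (volume : Measure ℝ)).restrict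
            (Set.univ ×ˢ Set.Ioc a b) := by
        rw [← MeasureTheory.Measure.prod_restrict, Measure.restrict_univ]
      rw [this]
      exact hPassoc.restrict
    have hswap := MeasureTheory.integral_integral_swap
      (f := fun (st : ℝ × ℝ) (u : ℝ) => P (st.1, st.2, u)) hrestr
    calc ∫ u in Set.Ioc a b, G u
        = ∫ (st : ℝ × ℝ), ∫ u in Set.Ioc a b, P (st.1, st.2, u) := hswap.symm
      _ = ∫ (st : ℝ × ℝ), (ρ (st.1, st.2, b) - ρ (st.1, st.2, a)) := by
          apply integral_congr_ae
          filter_upwards with st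
          rw [← intervalIntegral.integral_of_le hab]
          exact intervalIntegral.integral_eq_sub_of_hasDerivAt
            (fun u _ => hP_line_deriv st u)
            ((hP_line_cont st).intervalIntegrable a b)
      _ = g b ^ 2 - g a ^ 2 := by
          rw [integral_sub hb ha, hgdef, hgdef]
  have step2 : ∀ a b : ℝ, a ∈ S → b ∈ S → ∫ u in a..b, G u = g b ^ 2 - g a ^ 2 := by
    intro a b ha hb
    rcases le_total a b with hab | hab
    · exact step1 a b hab ha hb
    · rw [intervalIntegral.integral_symm, step1 b a hab hb ha]; ring
  obtain ⟨u₀, hu₀⟩ : ∃ u₀, u₀ ∈ S := hS.exists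
  have hdense : Dense S := MeasureTheory.Measure.dense_of_ae hS
  have step3 : ∀ b : ℝ, ∫ u in u₀..b, G u = g b ^ 2 - g u₀ ^ 2 := by
    have hcont1 : Continuous fun b => ∫ u in u₀..b, G u :=
      hG_int.continuous_primitive u₀
    have hcont2 : Continuous fun b => g b ^ 2 - g u₀ ^ 2 := by
      exact ((hg.continuous).pow 2).sub continuous_const
    exact fun b => congrFun (Continuous.ext_on hdense hcont1 hcont2
      (fun b hb => step2 u₀ b hu₀ hb)) b
  have key : ∀ a b : ℝ, ∫ u in a..b, (2 * g u * deriv g u) = ∫ u in a..b, G u := by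
    intro a b
    have h4 : ∫ u in a..b, G u = g b ^ 2 - g a ^ 2 := by
      have := intervalIntegral.integral_interval_sub_left
        (hG_int.intervalIntegrable (a := u₀) (b := b))
        (hG_int.intervalIntegrable (a := u₀) (b := a))
      rw [← this, step3 a, step3 b]; ring
    rw [hLHS a b, h4]
  -- a.e. identity  2 g g' = G
  have hae : (fun u => 2 * g u * deriv g u) =ᵐ[(volume : Measure ℝ)] G :=
    ae_eq_of_intervalIntegral_eq hcont2gg'.locallyIntegrable
      hG_int.locallyIntegrable key
  -- a.e. Cauchy-Schwarz bound
  have hG_bound : ∀ᵐ u : ℝ, |G u| ≤ 2 * g u * Real.sqrt (H u) := by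
    filter_upwards [hρslice, hD2slice] with u h1 h2
    have hqmeas : Continuous (fun st : ℝ × ℝ => q (st.1, st.2, u)) := by
      exact (hρ.continuous.sqrt).comp (continuous_fst.prodMk (continuous_snd.prodMk continuous_const))
    have hqsl : MemLp (fun st : ℝ × ℝ => q (st.1, st.2, u)) 2 (volume : Measure (ℝ × ℝ)) := by
      rw [memLp_two_iff_integrable_sq hqmeas.aestronglyMeasurable]
      have : (fun st : ℝ × ℝ => q (st.1, st.2, u) ^ 2) =
          fun st : ℝ × ℝ => ρ (st.1, st.2, u) := by
        funext st; exact hq_sq _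
      rwa [this]
    have hDslmeas : AEStronglyMeasurable (fun st : ℝ × ℝ => D (st.1, st.2, u))
        (volume : Measure (ℝ × ℝ)) := by
      exact (hD_meas.comp ((measurable_fst.prodMk
        (measurable_snd.prodMk measurable_const)))).aestronglyMeasurable
    have hDsl : MemLp (fun st : ℝ × ℝ => D (st.1, st.2, u)) 2 (volume : Measure (ℝ × ℝ)) := by
      rw [memLp_two_iff_integrable_sq hDslmeas]
      exact h2
    have hGu : G u = 2 * ∫ st : ℝ × ℝ, q (st.1, st.2, u) * D (st.1, st.2, u) := by
      rw [hG, ← integral_const_mul]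
      apply integral_congr_ae
      filter_upwards with st
      rw [hPid]; ring
    have hcs := abs_integral_mul_le_sqrt hqsl hDsl
    have hq2 : ∫ st : ℝ × ℝ, q (st.1, st.2, u) ^ 2 = g u ^ 2 := by
      rw [hgdef]
      apply integral_congr_ae
      filter_upwards with st
      exact hq_sq _
    have hgu' : Real.sqrt (∫ st : ℝ × ℝ, q (st.1, st.2, u) ^ 2) = g u := by
      rw [hq2, Real.sqrt_sq (hgpos u)]
    rw [hgu'] at hcs
    have hHu : H u = ∫ st : ℝ × ℝ, D (st.1, st.2, u) ^ 2 := rfl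
    rw [hGu, abs_mul, abs_of_nonneg (by norm_num : (0:ℝ) ≤ 2), hHu]
    nlinarith [hcs]
  -- main pointwise bound
  have hmain : ∀ᵐ u : ℝ, (deriv g u) ^ 2 ≤ H u := by
    filter_upwards [hae, hG_bound] with u h1 h2
    rcases eq_or_lt_of_le (hgpos u) with hgu | hgu
    · have hmin : IsLocalMin g u := by
        apply Filter.Eventually.of_forall
        intro y; rw [← hgu]; exact hgpos y
      rw [hmin.deriv_eq_zero]
      simpa using hHnonneg u
    · have h3 : |2 * g u * deriv g u| ≤ 2 * g u * Real.sqrt (H u) := h1 ▸ h2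
      have h4 : 2 * g u * |deriv g u| ≤ 2 * g u * Real.sqrt (H u) := by
        rwa [abs_mul, abs_of_nonneg (by positivity : (0:ℝ) ≤ 2 * g u)] at h3
      have h5 : |deriv g u| ≤ Real.sqrt (H u) :=
        le_of_mul_le_mul_left (by linarith [h4]) (by positivity : (0:ℝ) < 2 * g u)
      calc (deriv g u) ^ 2 = |deriv g u| ^ 2 := (sq_abs _).symm
        _ ≤ Real.sqrt (H u) ^ 2 := by
            exact pow_le_pow_left₀ (abs_nonneg _) h5 2
        _ = H u := Real.sq_sqrt (hHnonneg u)
  -- integrability of (deriv g)²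
  have hderiv2_int : Integrable (fun u => (deriv g u) ^ 2) := by
    refine hH_int.mono' (((hg.continuous_deriv le_rfl).pow 2).aestronglyMeasurable) ?_
    filter_upwards [hmain] with u hu
    rw [Real.norm_eq_abs, abs_of_nonneg (sq_nonneg _)]
    exact hu
  -- conclusion
  calc ∫ v, (deriv g v) ^ 2 ≤ ∫ u, H u := integral_mono_ae hderiv2_int hH_int hmain
    _ = ∫ x : ℝ × ℝ × ℝ, D x ^ 2 := hintH
    _ ≤ ∫ x : ℝ × ℝ × ℝ, W x := by
        refine integral_mono hD2_int hW_int ?_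
        intro x
        show D x ^ 2 ≤ W x
        rw [hDW x, hW]
        dsimp only
        have h1 := sq_nonneg (pderiv3 q (1,0,0) x)
        have h2 := sq_nonneg (pderiv3 q (0,1,0) x)
        linarith
    _ = _ := rfl
end

section
/- Let ρ : ℝ³ → ℝ be nonnegative, integrable with ∫ ρ = N, and strictly positive on a set of positive measure in every slab {x : x³ < c} and {x : x³ > c}. Define f(x³) = (2π/N) ∫_{-∞}^{x³} ∫∫ ρ(s,t,u) ds dt du, and for distinct integers (or half-integers) k ≠ l in the set K_N = {-(N-1)/2, ..., (N-1)/2}, define φ_k(x) = (ρ(x)/N)^{1/2} e^{i k f(x³)}. Then ∫_{ℝ³} φ_l(x)* φ_k(x) dx = δ_{kl}, i.e., the N functions {φ_k} form an orthonormal system in L²(ℝ³). -/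
/-!
With `F(c) = (1/N) ∫_{x₃ < c} ρ` we have `f = 2π F` and `φ̄_l φ_k = (ρ/N) e^{2πi(k-l) F(x₃)}`,
so the overlap integrates `e^{2πi(k-l)θ}` against the law of `θ = F(x₃)` under the probability
density `ρ/N`. Planes `x₃ = c` are Lebesgue-null, so the law `ν` of `x₃` has no atoms and `F` is
its continuous distribution function. A continuous distribution function carries its law to the
uniform law on `[0, 1]`, so the overlap is `∫₀¹ e^{2πi(k-l)θ} dθ = δ_{kl}`.
-/

open MeasureTheory ProbabilityTheory Real Complex Set Filter Topology

namespace ProbabilityTheory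

variable (ν : Measure ℝ) [IsProbabilityMeasure ν] [NullSingletonClass ν]

theorem continuous_cdf : Continuous (cdf ν) := by
  refine continuous_iff_continuousAt.2 fun a => ?_
  rw [(monotone_cdf ν).continuousAt_iff_leftLim_eq_rightLim, StieltjesFunction.rightLim_eq]
  have h := (cdf ν).measure_singleton a
  rw [measure_cdf, measure_singleton, eq_comm, ENNReal.ofReal_eq_zero, sub_nonpos] at h
  exact le_antisymm ((monotone_cdf ν).leftLim_le le_rfl) h

theorem measure_cdf_preimage_Iic {t : ℝ} (ht₀ : 0 ≤ t) (ht₁ : t < 1) :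
    ν (cdf ν ⁻¹' Iic t) = ENNReal.ofReal t := by
  set S := cdf ν ⁻¹' Iic t
  have hbdd : BddAbove S := by
    obtain ⟨b, hb⟩ :=
      ((tendsto_cdf_atTop ν).eventually (eventually_gt_nhds ht₁)).exists_forall_of_atTop
    exact ⟨b, fun u hu => le_of_not_gt fun hbu => (hb u hbu.le).not_ge hu⟩
  rcases S.eq_empty_or_nonempty with hS | hS
  · obtain rfl : t = 0 := by
      refine ht₀.eq_or_lt.elim Eq.symm fun ht => ?_
      obtain ⟨u, hu⟩ := ((tendsto_cdf_atBot ν).eventually (eventually_lt_nhds ht)).exists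
      exact (notMem_empty u (hS ▸ hu.le)).elim
    simp [hS]
  have hclosed : IsClosed S := isClosed_Iic.preimage (continuous_cdf ν)
  set c := sSup S
  have hc : c ∈ S := hclosed.csSup_mem hS hbdd
  have hSc : S = Iic c := Subset.antisymm (fun u hu => le_csSup hbdd hu)
    fun u hu => (monotone_cdf ν hu).trans hc
  have hcdf : cdf ν c = t := by
    have hright : ∀ᶠ u in 𝓝[>] c, t ≤ cdf ν u := eventually_nhdsWithin_of_forall
      fun u hu => (lt_of_not_ge fun h => (mem_Ioi.1 hu).not_ge (le_csSup hbdd h)).le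
    exact le_antisymm hc
      (ge_of_tendsto ((continuous_cdf ν).continuousWithinAt (s := Ioi c)) hright)
  rw [hSc, ← ofReal_cdf, hcdf]

theorem map_cdf : ν.map (cdf ν) = volume.restrict (Icc 0 1) := by
  refine Measure.ext_of_Iic _ _ fun t => ?_
  rw [Measure.map_apply (monotone_cdf ν).measurable measurableSet_Iic,
    Measure.restrict_apply measurableSet_Iic]
  rcases lt_or_ge t 0 with ht₀ | ht₀
  · have hpre : cdf ν ⁻¹' Iic t = ∅ :=
      eq_empty_of_forall_notMem fun u hu => (ht₀.trans_le (cdf_nonneg ν u)).not_ge hu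
    have hvol : Iic t ∩ Icc 0 1 = ∅ :=
      eq_empty_of_forall_notMem fun u hu => (ht₀.trans_le hu.2.1).not_ge hu.1
    simp [hpre, hvol]
  rcases lt_or_ge t 1 with ht₁ | ht₁
  · have hvol : Iic t ∩ Icc 0 1 = Icc 0 t := by
      ext u
      simp only [mem_inter_iff, mem_Iic, mem_Icc]
      grind
    rw [measure_cdf_preimage_Iic ν ht₀ ht₁, hvol, Real.volume_Icc, sub_zero]
  · have hpre : cdf ν ⁻¹' Iic t = univ :=
      eq_univ_of_forall fun u => (cdf_le_one ν u).trans ht₁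
    rw [hpre, measure_univ, inter_eq_right.2 fun u hu => hu.2.trans ht₁, Real.volume_Icc]
    simp

theorem integral_comp_cdf {E : Type*} [NormedAddCommGroup E] [NormedSpace ℝ E] {g : ℝ → E}
    (hg : Continuous g) : ∫ u, g (cdf ν u) ∂ν = ∫ θ in 0..1, g θ := by
  rw [← integral_map (monotone_cdf ν).measurable.aemeasurable hg.aestronglyMeasurable, map_cdf,
    intervalIntegral.integral_of_le zero_le_one, integral_Icc_eq_integral_Ioc]

end ProbabilityTheory

namespace MeasureTheory

variable {X : Type*} [MeasurableSpace X] {μ : Measure X} {p : X → ℝ}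

theorem measureReal_withDensity_ofReal (hp₀ : 0 ≤ᵐ[μ] p) (hp : Integrable p μ) {s : Set X}
    (hs : MeasurableSet s) :
    (μ.withDensity fun x => ENNReal.ofReal (p x)).real s = ∫ x in s, p x ∂μ := by
  rw [measureReal_def, withDensity_apply _ hs,
    ← ofReal_integral_eq_lintegral_ofReal hp.integrableOn (ae_restrict_of_ae hp₀),
    ENNReal.toReal_ofReal (setIntegral_nonneg_of_ae_restrict (ae_restrict_of_ae hp₀))]

theorem isProbabilityMeasure_withDensity_ofReal (hp₀ : 0 ≤ᵐ[μ] p) (hp : Integrable p μ)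
    (hp₁ : ∫ x, p x ∂μ = 1) :
    IsProbabilityMeasure (μ.withDensity fun x => ENNReal.ofReal (p x)) := by
  rw [isProbabilityMeasure_iff_real, measureReal_withDensity_ofReal hp₀ hp MeasurableSet.univ,
    Measure.restrict_univ, hp₁]

theorem nullSingletonClass_map_of_absolutelyContinuous {P : Measure X} {ξ : X → ℝ}
    (hξ : Measurable ξ) (hfiber : ∀ c, μ (ξ ⁻¹' {c}) = 0) (hPμ : P ≪ μ) :
    NullSingletonClass (P.map ξ) :=
  ⟨fun c => by rw [Measure.map_apply hξ (measurableSet_singleton c)]; exact hPμ (hfiber c)⟩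

variable {E : Type*} [NormedAddCommGroup E] [NormedSpace ℝ E]

theorem integral_smul_comp_setIntegral_lt {ξ : X → ℝ} (hξ : Measurable ξ)
    (hfiber : ∀ c, μ (ξ ⁻¹' {c}) = 0) (hp₀ : 0 ≤ᵐ[μ] p) (hp : Integrable p μ)
    (hp₁ : ∫ x, p x ∂μ = 1) {g : ℝ → E} (hg : Continuous g) :
    ∫ x, p x • g (∫ y in {y | ξ y < ξ x}, p y ∂μ) ∂μ = ∫ θ in 0..1, g θ := by
  set P := μ.withDensity fun x => ENNReal.ofReal (p x)
  have := isProbabilityMeasure_withDensity_ofReal hp₀ hp hp₁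
  have : IsProbabilityMeasure (P.map ξ) := Measure.isProbabilityMeasure_map hξ.aemeasurable
  have : NullSingletonClass (P.map ξ) := nullSingletonClass_map_of_absolutelyContinuous hξ hfiber
    (withDensity_absolutelyContinuous μ _)
  have hcdf : ∀ c, cdf (P.map ξ) c = ∫ y in {y | ξ y < c}, p y ∂μ := fun c => by
    rw [cdf_eq_real, measureReal_congr Iio_ae_eq_Iic.symm,
      map_measureReal_apply hξ measurableSet_Iio,
      measureReal_withDensity_ofReal hp₀ hp (hξ measurableSet_Iio)]
    rfl
  calc ∫ x, p x • g (∫ y in {y | ξ y < ξ x}, p y ∂μ) ∂μ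
      = ∫ x, g (cdf (P.map ξ) (ξ x)) ∂P := by
        rw [integral_withDensity_eq_integral_toReal_smul₀ hp.aemeasurable.ennreal_ofReal
          (ae_of_all _ fun _ => ENNReal.ofReal_lt_top)]
        refine integral_congr_ae (hp₀.mono fun x hx => ?_)
        simp only [hcdf, ENNReal.toReal_ofReal hx]
    _ = ∫ u, g (cdf (P.map ξ) u) ∂(P.map ξ) :=
        (integral_map hξ.aemeasurable
          (hg.comp (continuous_cdf _)).aestronglyMeasurable).symm
    _ = ∫ θ in 0..1, g θ := integral_comp_cdf _ hg

end MeasureTheory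

theorem integral_exp_two_pi_I_int_mul (m : ℤ) :
    ∫ θ in (0 : ℝ)..1, Complex.exp (2 * π * I * m * θ) = if m = 0 then 1 else 0 := by
  split_ifs with hm
  · simp [hm]
  have hc : 2 * π * I * m ≠ 0 := by simp [hm, pi_ne_zero]
  have hperiod : Complex.exp (2 * π * I * m) = 1 := by
    rw [show 2 * π * I * m = m * (2 * π * I) by ring, Complex.exp_int_mul_two_pi_mul_I]
  rw [integral_exp_mul_complex hc]
  simp [hperiod]

theorem Complex.conj_sqrt_mul_exp_mul_sqrt_mul_exp {a : ℝ} (ha : 0 ≤ a) (s t u : ℝ) :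
    starRingEnd ℂ (√a * exp (I * s * u)) * (√a * exp (I * t * u)) =
      a * exp (I * (t - s) * u) := by
  have hsq : (√a : ℂ) * √a = a := by exact_mod_cast Real.mul_self_sqrt ha
  rw [map_mul, conj_ofReal, ← exp_conj, mul_mul_mul_comm, hsq, ← exp_add]
  congr 2
  simp only [map_mul, conj_I, conj_ofReal]
  ring

theorem stmt4_general (N : ℕ) (hN : 0 < N) (ρ : ℝ × ℝ × ℝ → ℝ) (f : ℝ → ℝ)
    (φ : Fin N → ℝ × ℝ × ℝ → ℂ)
    (hρpos : ∀ x, 0 ≤ ρ x) (hρint : Integrable ρ) (hρN : ∫ x, ρ x = (N : ℝ))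
    (hf : ∀ c : ℝ, f c = (2 * π / N) * ∫ x in {x : ℝ × ℝ × ℝ | x.2.2 < c}, ρ x)
    (hφ : ∀ (j : Fin N) (x : ℝ × ℝ × ℝ),
      φ j x = (Real.sqrt (ρ x / N) : ℂ) *
        Complex.exp (Complex.I * (((j : ℝ) - ((N : ℝ) - 1) / 2) : ℝ) * (f x.2.2 : ℝ))) :
    ∀ j l : Fin N,
      (∫ x : ℝ × ℝ × ℝ, (starRingEnd ℂ) (φ l x) * φ j x) =
        if j = l then 1 else 0 := by
  intro j l
  have hN₀ : (0 : ℝ) < N := by positivity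
  have hp₀ : ∀ x, 0 ≤ ρ x / N := fun x => div_nonneg (hρpos x) hN₀.le
  have hp₁ : ∫ x, ρ x / N = 1 := by rw [integral_div, hρN, div_self hN₀.ne']
  have hx₃ : Measure.QuasiMeasurePreserving (fun x : ℝ × ℝ × ℝ => x.2.2) :=
    Measure.quasiMeasurePreserving_snd.comp Measure.quasiMeasurePreserving_snd
  have hintegrand : ∀ x, starRingEnd ℂ (φ l x) * φ j x =
      (ρ x / N) • exp (2 * π * I * ((j - l : ℤ) : ℂ) *
        ↑(∫ y in {y : ℝ × ℝ × ℝ | y.2.2 < x.2.2}, ρ y / N)) := by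
    intro x
    rw [hφ, hφ, conj_sqrt_mul_exp_mul_sqrt_mul_exp (hp₀ x), hf, real_smul, integral_div]
    congr 2
    push_cast
    ring
  rw [integral_congr_ae (ae_of_all _ hintegrand),
    integral_smul_comp_setIntegral_lt (p := fun x => ρ x / N)
      (g := fun θ : ℝ => exp (2 * π * I * ((j - l : ℤ) : ℂ) * θ)) hx₃.measurable
      (fun c => hx₃.preimage_null (measure_singleton c)) (ae_of_all _ hp₀) (hρint.div_const _)
      hp₁ (by fun_prop),
    integral_exp_two_pi_I_int_mul]
  simp [sub_eq_zero, Fin.ext_iff]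

theorem stmt4 (N : ℕ) (hN : 0 < N) (ρ : ℝ × ℝ × ℝ → ℝ) (f : ℝ → ℝ)
    (φ : Fin N → ℝ × ℝ × ℝ → ℂ)
    (hρpos : ∀ x, 0 ≤ ρ x) (hρint : Integrable ρ) (hρN : ∫ x, ρ x = (N : ℝ))
    (hslab₁ : ∀ c : ℝ, 0 < volume {x : ℝ × ℝ × ℝ | x.2.2 < c ∧ 0 < ρ x})
    (hslab₂ : ∀ c : ℝ, 0 < volume {x : ℝ × ℝ × ℝ | c < x.2.2 ∧ 0 < ρ x})
    (hf : ∀ c : ℝ, f c = (2 * π / N) * ∫ x in {x : ℝ × ℝ × ℝ | x.2.2 < c}, ρ x)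
    (hφ : ∀ (j : Fin N) (x : ℝ × ℝ × ℝ),
      φ j x = (Real.sqrt (ρ x / N) : ℂ) *
        Complex.exp (Complex.I * (((j : ℝ) - ((N : ℝ) - 1) / 2) : ℝ) * (f x.2.2 : ℝ))) :
    ∀ j l : Fin N,
      (∫ x : ℝ × ℝ × ℝ, (starRingEnd ℂ) (φ l x) * φ j x) =
        if j = l then 1 else 0 :=
  stmt4_general N hN ρ f φ hρpos hρint hρN hf hφ
end

section
/- Let h : ℝ³ → ℝ be defined by h(x¹,x²,x³) = ½((x¹)² + (x²)² - 2(x³)²). There exist no continuous vector fields a, b : ℝ³ → ℝ³ such that a(x) × b(x) = ∇h(x) for all x ∈ ℝ³. -/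
/-!
Since `a x ⬝ᵥ (a x ×₃ b x) = 0`, the field `u = (a₀, a₁, -2 a₂)` satisfies
`u x ⬝ᵥ x = a x ⬝ᵥ ∇h x = 0`, and it vanishes only where `a` does, hence only at `x = 0`.
So `u` is a nowhere vanishing tangent field on the unit sphere, contradicting the hairy ball
theorem.

For the hairy ball theorem, write `u` in spherical coordinates `(θ, φ)` as a complex number in
the moving tangent frame. The resulting map `F : ℝ × ℝ → ℂ` does not vanish, so it has a
continuous logarithm, which forces `θ ↦ F (θ, φ)` to have the same winding number for every `φ`.
But on the two pole circles `u` is constant while the frame turns once in opposite directions,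
giving winding numbers `1` and `-1`.
-/

open Real Matrix

namespace Complex

theorem eq_of_continuous_of_exp_eq {A : Type*} [TopologicalSpace A] [PreconnectedSpace A]
    {g₁ g₂ : A → ℂ} (h₁ : Continuous g₁) (h₂ : Continuous g₂)
    (he : ∀ a, exp (g₁ a) = exp (g₂ a)) (a : A) (ha : g₁ a = g₂ a) : g₁ = g₂ :=
  isCoveringMap_exp.eq_of_comp_eq h₁ h₂ (funext fun a ↦ Subtype.ext (he a)) a ha

theorem exists_continuous_exp_eq {X : Type*} [TopologicalSpace X] [SimplyConnectedSpace X]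
    [LocallyPathConnectedSpace X] {F : X → ℂ} (hF : Continuous F) (hF₀ : ∀ x, F x ≠ 0) :
    ∃ L : X → ℂ, Continuous L ∧ ∀ x, exp (L x) = F x := by
  obtain ⟨x₀⟩ := PathConnectedSpace.nonempty (X := X)
  obtain ⟨L, ⟨-, hL⟩, -⟩ := isCoveringMapOn_exp.existsUnique_continuousMap_lifts ⟨F, hF⟩
    (exp_log (hF₀ x₀)) hF₀
  exact ⟨L, L.continuous, congrFun hL⟩

theorem eq_add_of_exp_eq_mul_exp {g : ℝ → ℂ} (hg : Continuous g) {n : ℤ}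
    (h : ∀ θ : ℝ, exp (g θ) = exp (g 0) * exp (n * θ * I)) (θ : ℝ) :
    g θ = g 0 + n * θ * I :=
  congrFun (eq_of_continuous_of_exp_eq (g₂ := fun θ : ℝ ↦ g 0 + n * θ * I) hg (by fun_prop)
    (fun θ ↦ by rw [h, exp_add]) 0 (by simp)) θ

theorem int_eq_of_nonvanishing_homotopy {F : ℝ × ℝ → ℂ} (hF : Continuous F)
    (hF₀ : ∀ p, F p ≠ 0) (hper : ∀ t, F (2 * π, t) = F (0, t)) {T : ℝ} {m n : ℤ}
    (hm : ∀ θ : ℝ, F (θ, 0) = F (0, 0) * exp (m * θ * I))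
    (hn : ∀ θ : ℝ, F (θ, T) = F (0, T) * exp (n * θ * I)) : m = n := by
  obtain ⟨L, hL, hLF⟩ := exists_continuous_exp_eq hF hF₀
  have bottom := eq_add_of_exp_eq_mul_exp (g := fun θ ↦ L (θ, 0)) (by fun_prop)
    (by simpa only [hLF] using hm) (2 * π)
  have top := eq_add_of_exp_eq_mul_exp (g := fun θ ↦ L (θ, T)) (by fun_prop)
    (by simpa only [hLF] using hn) (2 * π)
  have side := congrFun (eq_of_continuous_of_exp_eq (g₁ := fun t ↦ L (2 * π, t))
    (g₂ := fun t ↦ L (0, t) + m * (2 * π * I)) (by fun_prop) (by fun_prop)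
    (fun t ↦ by rw [Complex.exp_add, exp_int_mul_two_pi_mul_I, mul_one, hLF, hLF, hper]) 0
    (by push_cast at bottom; rw [bottom]; ring)) T
  have hmn : (m : ℂ) * (2 * π * I) = n * (2 * π * I) := by
    push_cast at top
    linear_combination top - side
  exact_mod_cast mul_right_cancel₀ (by simp [pi_ne_zero, I_ne_zero]) hmn

end Complex

/- `θ` is the longitude and `φ` the polar angle. The three vectors below form an orthonormal frame
for all `θ, φ`, also at the poles, where the tangent vectors still depend on `θ`. -/
noncomputable def spherePoint (θ φ : ℝ) : Fin 3 → ℝ := ![sin φ * cos θ, sin φ * sin θ, cos φ]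

noncomputable def sphereTangentθ (θ : ℝ) : Fin 3 → ℝ := ![-sin θ, cos θ, 0]

noncomputable def sphereTangentφ (θ φ : ℝ) : Fin 3 → ℝ :=
  ![cos φ * cos θ, cos φ * sin θ, -sin φ]

noncomputable def sphereTangentCoord (v : Fin 3 → ℝ) (θ φ : ℝ) : ℂ :=
  (v ⬝ᵥ sphereTangentθ θ : ℝ) + (v ⬝ᵥ sphereTangentφ θ φ : ℝ) * Complex.I

theorem spherePoint_dotProduct_self (θ φ : ℝ) : spherePoint θ φ ⬝ᵥ spherePoint θ φ = 1 := by
  simp only [spherePoint, dotProduct, Fin.sum_univ_three, Fin.isValue, cons_val_zero,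
    cons_val_one, cons_val]
  linear_combination sin φ ^ 2 * sin_sq_add_cos_sq θ + sin_sq_add_cos_sq φ

theorem eq_zero_of_sphereTangentCoord_eq_zero {v : Fin 3 → ℝ} {θ φ : ℝ}
    (h : v ⬝ᵥ spherePoint θ φ = 0) (hc : sphereTangentCoord v θ φ = 0) : v = 0 := by
  obtain ⟨hθ, hφ⟩ : v ⬝ᵥ sphereTangentθ θ = 0 ∧ v ⬝ᵥ sphereTangentφ θ φ = 0 := by
    simpa [sphereTangentCoord, Complex.ext_iff] using hc
  simp only [dotProduct, spherePoint, sphereTangentθ, sphereTangentφ, Fin.sum_univ_three,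
    Fin.isValue, cons_val_zero, cons_val_one, cons_val, mul_neg, mul_zero, add_zero] at h hθ hφ
  have h₁ := sin_sq_add_cos_sq θ
  have h₂ := sin_sq_add_cos_sq φ
  ext i
  fin_cases i <;>
    simp only [Fin.zero_eta, Fin.mk_one, Fin.reduceFinMk, Fin.isValue, Pi.zero_apply]
  · linear_combination (-sin θ) * hθ + (cos φ * cos θ) * hφ + (sin φ * cos θ) * h
      - v 0 * h₁ - (v 0 * cos θ ^ 2 + v 1 * cos θ * sin θ) * h₂
  · linear_combination cos θ * hθ + (cos φ * sin θ) * hφ + (sin φ * sin θ) * h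
      - v 1 * h₁ - (v 1 * sin θ ^ 2 + v 0 * cos θ * sin θ) * h₂
  · linear_combination (-sin φ) * hφ + cos φ * h - v 2 * h₂

theorem sphereTangentCoord_zero (v : Fin 3 → ℝ) (θ : ℝ) :
    sphereTangentCoord v θ 0 = (v 1 + v 0 * Complex.I) * Complex.exp (θ * Complex.I) := by
  apply Complex.ext <;>
    simp [sphereTangentCoord, sphereTangentθ, sphereTangentφ, dotProduct, Fin.sum_univ_three,
      Complex.exp_ofReal_mul_I_re, Complex.exp_ofReal_mul_I_im, Complex.cos_ofReal_re,
      Complex.sin_ofReal_re] <;> ring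

theorem sphereTangentCoord_pi (v : Fin 3 → ℝ) (θ : ℝ) :
    sphereTangentCoord v θ π =
      (v 1 - v 0 * Complex.I) * Complex.exp ((-θ : ℝ) * Complex.I) := by
  apply Complex.ext <;>
    simp [sphereTangentCoord, sphereTangentθ, sphereTangentφ, dotProduct, Fin.sum_univ_three,
      Complex.exp_ofReal_mul_I_re, Complex.exp_ofReal_mul_I_im, Complex.cos_ofReal_re,
      -Complex.ofReal_neg] <;> ring

theorem exists_eq_zero_of_forall_dotProduct_eq_zero {u : (Fin 3 → ℝ) → Fin 3 → ℝ}
    (hu : ContinuousOn u {x | x ⬝ᵥ x = 1}) (htan : ∀ x, x ⬝ᵥ x = 1 → u x ⬝ᵥ x = 0) :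
    ∃ x, x ⬝ᵥ x = 1 ∧ u x = 0 := by
  by_contra! hu₀
  let F : ℝ × ℝ → ℂ := fun p ↦ sphereTangentCoord (u (spherePoint p.1 p.2)) p.1 p.2
  have hF : Continuous F := by
    have huX : Continuous fun p : ℝ × ℝ ↦ u (spherePoint p.1 p.2) :=
      hu.comp_continuous (by unfold spherePoint; fun_prop)
        fun p ↦ spherePoint_dotProduct_self p.1 p.2
    have hθ : Continuous fun p : ℝ × ℝ ↦ sphereTangentθ p.1 := by
      unfold sphereTangentθ; fun_prop
    have hφ : Continuous fun p : ℝ × ℝ ↦ sphereTangentφ p.1 p.2 := by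
      unfold sphereTangentφ; fun_prop
    exact (Complex.continuous_ofReal.comp (huX.dotProduct hθ)).add
      ((Complex.continuous_ofReal.comp (huX.dotProduct hφ)).mul continuous_const)
  have hF₀ : ∀ p, F p ≠ 0 := fun p hp ↦
    hu₀ _ (spherePoint_dotProduct_self p.1 p.2) <|
      eq_zero_of_sphereTangentCoord_eq_zero
        (htan _ (spherePoint_dotProduct_self p.1 p.2)) hp
  have hper : ∀ t, F (2 * π, t) = F (0, t) := by
    simp [F, sphereTangentCoord, spherePoint, sphereTangentθ, sphereTangentφ]
  have hnorth : ∀ θ : ℝ, F (θ, 0) = F (0, 0) * Complex.exp ((1 : ℤ) * θ * Complex.I) := by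
    simp [F, sphereTangentCoord_zero, spherePoint]
  have hsouth : ∀ θ : ℝ, F (θ, π) = F (0, π) * Complex.exp ((-1 : ℤ) * θ * Complex.I) := by
    simp [F, sphereTangentCoord_pi, spherePoint]
  exact absurd (Complex.int_eq_of_nonvanishing_homotopy hF hF₀ hper hnorth hsouth) (by decide)

theorem stmt7 :
    ¬ ∃ a b : (Fin 3 → ℝ) → (Fin 3 → ℝ), Continuous a ∧ Continuous b ∧
      ∀ x : Fin 3 → ℝ, crossProduct (a x) (b x) = ![x 0, x 1, -2 * x 2] := by
  rintro ⟨a, b, ha, -, hab⟩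
  let u : (Fin 3 → ℝ) → Fin 3 → ℝ := fun x ↦ ![a x 0, a x 1, -2 * a x 2]
  have htan : ∀ x, u x ⬝ᵥ x = 0 := fun x ↦ by
    simpa [u, hab, dotProduct, Fin.sum_univ_three, mul_assoc, mul_left_comm] using
      dot_self_cross (a x) (b x)
  obtain ⟨x, hx, hux⟩ := exists_eq_zero_of_forall_dotProduct_eq_zero
    (u := u) (by unfold u; fun_prop) fun x _ ↦ htan x
  obtain ⟨ha₀, ha₁, ha₂⟩ : a x 0 = 0 ∧ a x 1 = 0 ∧ a x 2 = 0 := by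
    simpa [u, funext_iff, Fin.forall_fin_succ] using hux
  have hax : a x = 0 := by
    ext i; fin_cases i <;> assumption
  have hgrad : ![x 0, x 1, -2 * x 2] = 0 := by
    rw [← hab x, hax, map_zero, LinearMap.zero_apply]
  obtain ⟨h₀, h₁, h₂⟩ : x 0 = 0 ∧ x 1 = 0 ∧ x 2 = 0 := by
    simpa [funext_iff, Fin.forall_fin_succ] using hgrad
  simp [dotProduct, Fin.sum_univ_three, h₀, h₁, h₂] at hx
end

section
/- Let T = diag(1,1,-2). There exist no vectors â, b̂ ∈ ℝ³ and 3×3 real matrices A, B such that â × b̂ = 0 and â × (Bx) - b̂ × (Ax) = Tx for all x ∈ ℝ³. -/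
open Matrix
theorem stmt8 :
    ¬ ∃ (ahat bhat : Fin 3 → ℝ) (A B : Matrix (Fin 3) (Fin 3) ℝ),
      crossProduct ahat bhat = 0 ∧
      ∀ x : Fin 3 → ℝ,
        crossProduct ahat (B.mulVec x) - crossProduct bhat (A.mulVec x) =
          (Matrix.diagonal ![1, 1, -2]).mulVec x := by
  rintro ⟨a, b, A, B, hc, h⟩
  have hc0 := congrFun hc 0
  have hc1 := congrFun hc 1
  have hc2 := congrFun hc 2
  simp only [crossProduct] at hc0 hc1 hc2
  simp at hc0 hc1 hc2
  have h00 := congrFun (h ![1,0,0]) 0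
  have h01 := congrFun (h ![1,0,0]) 1
  have h02 := congrFun (h ![1,0,0]) 2
  have h10 := congrFun (h ![0,1,0]) 0
  have h11 := congrFun (h ![0,1,0]) 1
  have h12 := congrFun (h ![0,1,0]) 2
  have h20 := congrFun (h ![0,0,1]) 0
  have h21 := congrFun (h ![0,0,1]) 1
  have h22 := congrFun (h ![0,0,1]) 2
  simp [crossProduct, Matrix.mulVec, Matrix.diagonal, dotProduct, Fin.sum_univ_three] at h00 h01 h02 h10 h11 h12 h20 h21 h22
  -- a ⋅ T e_i = -(a×b)·(A e_i) = 0
  have ha0 : a 0 = 0 := by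
    linear_combination -(a 0 * h00 + a 1 * h01 + a 2 * h02 + (A 0 0) * hc0 + (A 1 0) * hc1 + (A 2 0) * hc2)
  have ha1 : a 1 = 0 := by
    linear_combination -(a 0 * h10 + a 1 * h11 + a 2 * h12 + (A 0 1) * hc0 + (A 1 1) * hc1 + (A 2 1) * hc2)
  have ha2 : a 2 = 0 := by
    linear_combination (1/2 : ℝ) * (a 0 * h20 + a 1 * h21 + a 2 * h22 + (A 0 2) * hc0 + (A 1 2) * hc1 + (A 2 2) * hc2)
  have hb0 : b 0 = 0 := by
    linear_combination -(b 0 * h00 + b 1 * h01 + b 2 * h02 + (B 0 0) * hc0 + (B 1 0) * hc1 + (B 2 0) * hc2)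
  have hb1 : b 1 = 0 := by
    linear_combination -(b 0 * h10 + b 1 * h11 + b 2 * h12 + (B 0 1) * hc0 + (B 1 1) * hc1 + (B 2 1) * hc2)
  have hb2 : b 2 = 0 := by
    linear_combination (1/2 : ℝ) * (b 0 * h20 + b 1 * h21 + b 2 * h22 + (B 0 2) * hc0 + (B 1 2) * hc1 + (B 2 2) * hc2)
  rw [ha1, ha2, hb1, hb2] at h00
  norm_num at h00
end
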